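/- arXiv:1812.01815 — 3 statements merged into one kernel-verified Lean document; each statement's English description precedes it below -/
import Mathlib

section
/- Let μ be a finite measure on ℝ^d absolutely continuous with respect to Lebesgue measure, and let S : ℝ^d → ℝ be continuous with μ({x : S(x) = 0}) = 0. If f : ℝ^d → ℝ is bounded and measurable and F(r) = (1/(2r)) ∫_{|S(x)| ≤ r} f(x) dμ(x) converges to a limit L as r → 0⁺, then for any smooth even function q : ℝ → ℝ with support in [−M_q, M_q] and Q∞ = ∫ q > 0, lim_{r→0⁺} (1/(Q∞ r)) ∫ q(S(x)/r) f(x) dμ(x) = L. -/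
open MeasureTheory Filter Set

theorem kernel_smoothing_limit
    (d : ℕ) (μ : Measure (EuclideanSpace ℝ (Fin d))) [IsFiniteMeasure μ]
    (hac : μ ≪ volume)
    (S : EuclideanSpace ℝ (Fin d) → ℝ) (hS : Continuous S)
    (hnull : μ {x | S x = 0} = 0)
    (f : EuclideanSpace ℝ (Fin d) → ℝ)
    (hfm : Measurable f) (C : ℝ) (hfb : ∀ x, |f x| ≤ C)
    (L : ℝ)
    (hlim : Tendsto (fun r : ℝ => (1 / (2 * r)) * ∫ x in {x | |S x| ≤ r}, f x ∂μ)
      (nhdsWithin 0 (Ioi 0)) (nhds L))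
    (q : ℝ → ℝ) (hq : ContDiff ℝ (⊤ : ℕ∞) q) (heven : ∀ s, q (-s) = q s)
    (Mq : ℝ) (hsupp : ∀ s : ℝ, Mq ≤ |s| → q s = 0)
    (Qinf : ℝ) (hQ : Qinf = ∫ u : ℝ, q u) (hQpos : 0 < Qinf) :
    Tendsto (fun r : ℝ => (1 / (Qinf * r)) * ∫ x, q (S x / r) * f x ∂μ)
      (nhdsWithin 0 (Ioi 0)) (nhds L) := by
  have hC : 0 ≤ C := (abs_nonneg _).trans (hfb 0)
  have hMq : 0 < Mq := by
    by_contra h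
    push_neg at h
    have hz : ∀ s : ℝ, q s = 0 := fun s => hsupp s (h.trans (abs_nonneg s))
    rw [hQ] at hQpos
    simp only [hz, integral_zero] at hQpos
    exact lt_irrefl 0 hQpos
  have hq1 : ContDiff ℝ 1 q := hq.of_le (by simp)
  have hcs : HasCompactSupport q := by
    apply HasCompactSupport.intro (isCompact_Icc (a := -Mq) (b := Mq))
    intro s hs
    apply hsupp
    simp only [mem_Icc, not_and_or, not_le] at hs
    rcases hs with h | h
    · rw [abs_of_neg (by linarith)]; linarith
    · rw [abs_of_pos (by linarith)]; linarith
  have hq'c : Continuous (deriv q) := hq.continuous_deriv (by simp)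
  have hq'cs : HasCompactSupport (deriv q) := hcs.deriv
  have hq'int : Integrable (deriv q) := hq'c.integrable_of_hasCompactSupport hq'cs
  have hq'z : ∀ u : ℝ, deriv q u ≠ 0 → |u| ≤ Mq := by
    intro u hu
    have h1 : u ∈ tsupport q := support_deriv_subset (Function.mem_support.2 hu)
    have h2 : tsupport q ⊆ Icc (-Mq) Mq := by
      apply closure_minimal _ isClosed_Icc
      intro s hs
      by_contra hcon
      simp only [mem_Icc, not_and_or, not_le] at hcon
      apply Function.mem_support.1 hs
      apply hsupp
      rcases hcon with h | h
      · rw [abs_of_neg (by linarith)]; linarith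
      · rw [abs_of_pos (by linarith)]; linarith
    exact abs_le.2 ⟨(h2 h1).1, (h2 h1).2⟩
  -- layer cake representation of q
  have layer : ∀ s : ℝ,
      q s = ∫ u in Ioi (0:ℝ), (Ioi |s|).indicator (fun u => -(deriv q u)) u := by
    intro s
    have h1 : ∫ u in Ioi |s|, deriv q u = - q |s| := hcs.integral_Ioi_deriv_eq hq1 |s|
    have habs : q |s| = q s := by
      rcases abs_cases s with ⟨h, _⟩ | ⟨h, _⟩
      · rw [h]
      · rw [h, heven]
    rw [setIntegral_indicator measurableSet_Ioi, Ioi_inter_Ioi,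
      sup_eq_right.2 (abs_nonneg s), integral_neg, h1, neg_neg, habs]
  have hfint : Integrable f μ :=
    ⟨hfm.aestronglyMeasurable, HasFiniteIntegral.of_bounded (C := C)
      (ae_of_all _ (fun x => by simpa using hfb x))⟩
  set Φ : ℝ → ℝ := fun ρ => ∫ x in {x | |S x| ≤ ρ}, f x ∂μ with hΦ
  set F : ℝ → ℝ := fun ρ => (1 / (2 * ρ)) * Φ ρ with hF
  have hlim' : Tendsto F (nhdsWithin 0 (Ioi 0)) (nhds L) := hlim
  -- countability of positive-measure level sets of |S|
  have hcnt : Set.Countable {t : ℝ | 0 < μ {x | |S x| = t}} :=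
    Measure.countable_meas_level_set_pos hS.measurable.abs
  -- the key identity, for each r > 0
  have key : ∀ r : ℝ, 0 < r →
      (∫ x, q (S x / r) * f x ∂μ)
        = r * ∫ u in Ioi (0:ℝ), (-(deriv q u)) * ((2 * u) * F (u * r)) ∧
      AEStronglyMeasurable (fun u => (-(deriv q u)) * ((2 * u) * F (u * r)))
        (volume.restrict (Ioi (0:ℝ))) := by
    intro r hr
    set E : Set (EuclideanSpace ℝ (Fin d) × ℝ) := {p | |S p.1| < p.2 * r} with hE
    have hEm : MeasurableSet E :=
      measurableSet_lt (hS.measurable.comp measurable_fst).abs (measurable_snd.mul_const r)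
    set H : EuclideanSpace ℝ (Fin d) × ℝ → ℝ :=
      E.indicator (fun p => (-(deriv q p.2)) * f p.1) with hH
    have hHm : Measurable H :=
      Measurable.indicator ((hq'c.measurable.comp measurable_snd).neg.mul
        (hfm.comp measurable_fst)) hEm
    have hHint : Integrable H (μ.prod (volume.restrict (Ioi (0:ℝ)))) := by
      apply Integrable.mono
        ((integrable_const C).mul_prod (hq'int.restrict (s := Ioi (0:ℝ))).abs)
        hHm.aestronglyMeasurable
      apply ae_of_all
      intro p
      rw [hH]
      by_cases hp : p ∈ E
      · rw [Set.indicator_of_mem hp, Real.norm_eq_abs, Real.norm_eq_abs,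
          abs_of_nonneg (show (0:ℝ) ≤ C * |deriv q p.2| by positivity),
          abs_mul, abs_neg]
        exact (mul_le_mul_of_nonneg_left (hfb p.1) (abs_nonneg _)).trans_eq
          (mul_comm _ _)
      · rw [Set.indicator_of_notMem hp, norm_zero, Real.norm_eq_abs,
          abs_of_nonneg (show (0:ℝ) ≤ C * |deriv q p.2| by positivity)]
        positivity
    have h1 : ∀ x, q (S x / r) * f x = ∫ u in Ioi (0:ℝ), H (x, u) := by
      intro x
      rw [layer (S x / r), ← integral_mul_const]
      apply setIntegral_congr_fun measurableSet_Ioi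
      intro u _
      have hiff : (x, u) ∈ E ↔ |S x / r| < u := by
        rw [hE, mem_setOf_eq, abs_div, abs_of_pos hr, div_lt_iff₀ hr]
      by_cases hmem : (x, u) ∈ E
      · simp only [hH, Set.indicator_of_mem hmem,
          Set.indicator_of_mem (show u ∈ Ioi |S x / r| from hiff.1 hmem)]
      · simp only [hH, Set.indicator_of_notMem hmem,
          Set.indicator_of_notMem
            (show u ∉ Ioi |S x / r| from fun hc => hmem (hiff.2 hc)), zero_mul]
    have hswap : ∫ x, q (S x / r) * f x ∂μ
        = ∫ u in Ioi (0:ℝ), ∫ x, H (x, u) ∂μ := by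
      rw [show (fun x => q (S x / r) * f x) = fun x => ∫ u in Ioi (0:ℝ), H (x, u)
        from funext h1]
      exact integral_integral_swap hHint
    have hg : Integrable (fun u => ∫ x, H (x, u) ∂μ) (volume.restrict (Ioi (0:ℝ))) :=
      hHint.integral_prod_right
    have h2 : ∀ u : ℝ, (∫ x, H (x, u) ∂μ)
        = (-(deriv q u)) * ∫ x in {x | |S x| < u * r}, f x ∂μ := by
      intro u
      have hps : ∀ x, H (x, u)
          = ({x | |S x| < u * r}).indicator (fun x => (-(deriv q u)) * f x) x := by
        intro x
        by_cases hx : |S x| < u * r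
        · simp only [hH,
            Set.indicator_of_mem (show (x, u) ∈ E from hx),
            Set.indicator_of_mem (show x ∈ {x | |S x| < u * r} from hx)]
        · simp only [hH,
            Set.indicator_of_notMem (show (x, u) ∉ E from hx),
            Set.indicator_of_notMem (show x ∉ {x | |S x| < u * r} from hx)]
      rw [show (fun x => H (x, u))
          = ({x | |S x| < u * r}).indicator (fun x => (-(deriv q u)) * f x)
        from funext hps]
      rw [integral_indicator (measurableSet_lt hS.measurable.abs measurable_const),
        integral_const_mul]
    have hnullae : ∀ᵐ u ∂(volume : Measure ℝ), μ {x | |S x| = u * r} = 0 := by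
      have hz : (volume : Measure ℝ) ((fun t => t / r) '' {t : ℝ | 0 < μ {x | |S x| = t}}) = 0 :=
        (hcnt.image _).measure_zero volume
      rw [ae_iff]
      apply measure_mono_null _ hz
      intro u hu
      simp only [mem_setOf_eq] at hu
      exact ⟨u * r, by simpa [pos_iff_ne_zero] using hu, by field_simp⟩
    have hae : (fun u => ∫ x, H (x, u) ∂μ)
        =ᵐ[volume.restrict (Ioi (0:ℝ))]
        (fun u => r * ((-(deriv q u)) * ((2 * u) * F (u * r)))) := by
      filter_upwards [ae_restrict_of_ae hnullae, ae_restrict_mem measurableSet_Ioi]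
        with u hu1 hu2
      rw [h2 u]
      have hset : {x | |S x| < u * r} =ᵐ[μ] {x | |S x| ≤ u * r} := by
        rw [ae_eq_set]
        constructor
        · exact measure_mono_null
            (fun x hx => (hx.2 (show |S x| ≤ u * r from le_of_lt hx.1)).elim)
            measure_empty
        · apply measure_mono_null _ hu1
          intro x hx
          simp only [mem_diff, mem_setOf_eq, not_lt] at hx
          exact le_antisymm hx.1 hx.2
      rw [setIntegral_congr_set hset]
      have hur : (0:ℝ) < u * r := mul_pos hu2 hr
      rw [hF]
      simp only [hΦ]
      have hu0 : u ≠ 0 := ne_of_gt hu2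
      field_simp
    constructor
    · rw [hswap, integral_congr_ae hae, integral_const_mul]
    · have hsm1 : AEStronglyMeasurable (fun u => r * ((-(deriv q u)) * ((2 * u) * F (u * r))))
          (volume.restrict (Ioi (0:ℝ))) := hg.aestronglyMeasurable.congr hae
      have := hsm1.const_mul r⁻¹
      apply this.congr
      apply ae_of_all
      intro u
      field_simp
  -- the identity Qinf = ∫ u in Ioi 0, (-q'(u)) * 2u
  have hQid : Qinf = ∫ u in Ioi (0:ℝ), (-(deriv q u)) * (2 * u) := by
    set E : Set (ℝ × ℝ) := {p | |p.1| < p.2} with hE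
    have hEm : MeasurableSet E := measurableSet_lt measurable_fst.abs measurable_snd
    set J : ℝ × ℝ → ℝ := E.indicator (fun p => -(deriv q p.2)) with hJ
    have hJm : Measurable J :=
      Measurable.indicator (hq'c.measurable.comp measurable_snd).neg hEm
    have hJint : Integrable J ((volume : Measure ℝ).prod (volume.restrict (Ioi (0:ℝ)))) := by
      apply Integrable.mono
        ((IntegrableOn.integrable_indicator
          ((integrableOn_const_iff (s := Icc (-Mq) Mq) (C := (1:ℝ))).2 (Or.inr (by
            rw [Real.volume_Icc]; exact ENNReal.ofReal_lt_top))) measurableSet_Icc).mul_prod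
          (hq'int.restrict (s := Ioi (0:ℝ))).abs)
        hJm.aestronglyMeasurable
      apply ae_of_all
      intro p
      by_cases hp : p ∈ E
      · rw [hJ, Set.indicator_of_mem hp]
        by_cases hz : deriv q p.2 = 0
        · simp only [hz, neg_zero, norm_zero, Real.norm_eq_abs]
          positivity
        · have h1 : |p.2| ≤ Mq := hq'z p.2 hz
          have h2 : p.1 ∈ Icc (-Mq) Mq := by
            have : |p.1| < p.2 := hp
            have := abs_le.1 h1
            constructor <;> [nlinarith [abs_le.1 (le_of_lt ‹|p.1| < p.2›), neg_abs_le p.1,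
              le_abs_self p.1]; nlinarith [neg_abs_le p.1, le_abs_self p.1]]
          rw [Set.indicator_of_mem h2, Real.norm_eq_abs, Real.norm_eq_abs, abs_neg, one_mul,
            abs_abs]
      · rw [hJ, Set.indicator_of_notMem hp, norm_zero]
        positivity
    have h1 : ∀ s : ℝ, q s = ∫ u in Ioi (0:ℝ), J (s, u) := by
      intro s
      rw [layer s]
      apply setIntegral_congr_fun measurableSet_Ioi
      intro u _
      by_cases hmem : (s, u) ∈ E
      · simp only [hJ, Set.indicator_of_mem hmem,
          Set.indicator_of_mem (show u ∈ Ioi |s| from hmem)]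
      · simp only [hJ, Set.indicator_of_notMem hmem,
          Set.indicator_of_notMem (show u ∉ Ioi |s| from hmem)]
    have hswap : ∫ s : ℝ, q s = ∫ u in Ioi (0:ℝ), ∫ s : ℝ, J (s, u) := by
      rw [show (fun s : ℝ => q s) = fun s : ℝ => ∫ u in Ioi (0:ℝ), J (s, u) from funext h1]
      exact integral_integral_swap hJint
    rw [hQ, hswap]
    apply setIntegral_congr_fun measurableSet_Ioi
    intro u hu
    show (∫ s : ℝ, J (s, u)) = (-(deriv q u)) * (2 * u)
    have hps : ∀ s : ℝ, J (s, u) = (Ioo (-u) u).indicator (fun _ => -(deriv q u)) s := by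
      intro s
      by_cases hs : |s| < u
      · simp only [hJ, Set.indicator_of_mem (show (s, u) ∈ E from hs),
          Set.indicator_of_mem (show s ∈ Ioo (-u) u from abs_lt.1 hs)]
      · simp only [hJ, Set.indicator_of_notMem (show (s, u) ∉ E from hs),
          Set.indicator_of_notMem (show s ∉ Ioo (-u) u from fun hc => hs (abs_lt.2 hc))]
    rw [show (fun s : ℝ => J (s, u)) = (Ioo (-u) u).indicator (fun _ => -(deriv q u))
      from funext hps]
    rw [integral_indicator measurableSet_Ioo, setIntegral_const, measureReal_def, Real.volume_Ioo,
      ENNReal.toReal_ofReal (by simp only [mem_Ioi] at hu; linarith), smul_eq_mul]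
    simp only [mem_Ioi] at hu
    ring
  -- extract the uniform bound on F near 0
  obtain ⟨δ, hδpos, hδ⟩ : ∃ δ > 0, ∀ ρ : ℝ, 0 < ρ → ρ < δ → |F ρ| ≤ |L| + 1 := by
    obtain ⟨δ, hδpos, h⟩ := Metric.tendsto_nhdsWithin_nhds.mp hlim' 1 one_pos
    refine ⟨δ, hδpos, fun ρ h1 h2 => ?_⟩
    have := h (show ρ ∈ Ioi (0:ℝ) from h1)
      (show dist ρ 0 < δ by rw [Real.dist_eq, sub_zero, abs_of_pos h1]; exact h2)
    rw [Real.dist_eq] at this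
    calc |F ρ| = |(F ρ - L) + L| := by ring_nf
      _ ≤ |F ρ - L| + |L| := abs_add_le _ _
      _ ≤ |L| + 1 := by linarith
  -- dominated convergence
  have hbint : Integrable (fun u => |deriv q u| * (2 * Mq * (|L| + 1)))
      (volume.restrict (Ioi (0:ℝ))) := (hq'int.restrict.abs).mul_const _
  have hDCT : Tendsto (fun r : ℝ => ∫ u in Ioi (0:ℝ), (-(deriv q u)) * ((2 * u) * F (u * r)))
      (nhdsWithin 0 (Ioi 0)) (nhds (∫ u in Ioi (0:ℝ), (-(deriv q u)) * ((2 * u) * L))) := by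
    apply tendsto_integral_filter_of_dominated_convergence
      (fun u => |deriv q u| * (2 * Mq * (|L| + 1)))
    · filter_upwards [self_mem_nhdsWithin] with r hr
      exact (key r hr).2
    · have hev : Ioo (0:ℝ) (δ / Mq) ∈ nhdsWithin (0:ℝ) (Ioi 0) :=
        Ioo_mem_nhdsGT_of_mem ⟨le_refl 0, by positivity⟩
      filter_upwards [hev] with r hr
      rw [ae_restrict_iff' measurableSet_Ioi]
      apply ae_of_all
      intro u hu
      simp only [mem_Ioi] at hu
      by_cases hz : deriv q u = 0
      · rw [hz]
        simp only [neg_zero, zero_mul, norm_zero, abs_zero]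
        positivity
      · have huM : u ≤ Mq := (le_abs_self u).trans (hq'z u hz)
        have hur1 : 0 < u * r := mul_pos hu hr.1
        have hur2 : u * r < δ := by
          calc u * r ≤ Mq * r := mul_le_mul_of_nonneg_right huM (le_of_lt hr.1)
            _ < Mq * (δ / Mq) := by
                apply mul_lt_mul_of_pos_left hr.2 hMq
            _ = δ := by field_simp
        have hFb : |F (u * r)| ≤ |L| + 1 := hδ _ hur1 hur2
        rw [Real.norm_eq_abs, abs_mul, abs_mul, abs_neg]
        have h2u : |2 * u| = 2 * u := abs_of_pos (by linarith)
        rw [h2u]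
        apply mul_le_mul_of_nonneg_left _ (abs_nonneg _)
        calc 2 * u * |F (u * r)| ≤ 2 * u * (|L| + 1) :=
              mul_le_mul_of_nonneg_left hFb (by linarith)
          _ ≤ 2 * Mq * (|L| + 1) := by nlinarith [abs_nonneg L]
    · exact hbint
    · rw [ae_restrict_iff' measurableSet_Ioi]
      apply ae_of_all
      intro u hu
      simp only [mem_Ioi] at hu
      have hmul : Tendsto (fun r : ℝ => u * r) (nhdsWithin 0 (Ioi 0))
          (nhdsWithin 0 (Ioi 0)) := by
        apply tendsto_nhdsWithin_of_tendsto_nhds_of_eventually_within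
        · have : Tendsto (fun r : ℝ => u * r) (nhds 0) (nhds (u * 0)) :=
            (continuous_mul_left u).tendsto 0
          rw [mul_zero] at this
          exact this.mono_left nhdsWithin_le_nhds
        · filter_upwards [self_mem_nhdsWithin] with r hr
          exact mul_pos hu hr
      exact ((hlim'.comp hmul).const_mul (2 * u)).const_mul (-(deriv q u))
  -- compute the limit value
  have hlimval : ∫ u in Ioi (0:ℝ), (-(deriv q u)) * ((2 * u) * L) = Qinf * L := by
    rw [hQid, ← integral_mul_const]
    congr 1
    ext u
    ring
  rw [hlimval] at hDCT
  have hfinal : Tendsto (fun r : ℝ =>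
      (1 / Qinf) * ∫ u in Ioi (0:ℝ), (-(deriv q u)) * ((2 * u) * F (u * r)))
      (nhdsWithin 0 (Ioi 0)) (nhds L) := by
    have := hDCT.const_mul (1 / Qinf)
    rw [show 1 / Qinf * (Qinf * L) = L by field_simp] at this
    exact this
  apply hfinal.congr'
  filter_upwards [self_mem_nhdsWithin] with r hr
  rw [(key r hr).1]
  have hr0 : (r : ℝ) ≠ 0 := ne_of_gt hr
  field_simp
  ring
  simp only [mul_comm r _]
end

section
/- Let g : ℝ^d → ℝ be smooth with compact support and S : ℝ^d → ℝ smooth, with ∇S(x) ≠ 0 for all x in {x : S(x) = 0} ∩ supp(g). Then the function F(s) = ∫_{S(x) < s} g(x) dx is differentiable at s = 0. -/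
open MeasureTheory Set

variable {d : ℕ}

local notation "E" => EuclideanSpace ℝ (Fin d)

lemma slicing (lam : (EuclideanSpace ℝ (Fin d)) →L[ℝ] ℝ) (hlam : lam ≠ 0)
    (h : EuclideanSpace ℝ (Fin d) → ℝ) (hcont : Continuous h) (hcs : HasCompactSupport h) :
    DifferentiableAt ℝ (fun s : ℝ => ∫ y in {y | lam y < s}, h y) 0 := by
  -- find v with lam v = 1
  obtain ⟨u, hu⟩ : ∃ u : E, lam u ≠ 0 := by
    by_contra hcon
    push_neg at hcon
    exact hlam (ContinuousLinearMap.ext fun x => by simp [hcon x])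
  set v : E := (lam u)⁻¹ • u with hv_def
  have hv : lam v = 1 := by simp [hv_def, inv_mul_cancel₀ hu]
  -- the kernel and a basis of it
  set k : Submodule ℝ E := LinearMap.ker (lam : E →ₗ[ℝ] ℝ) with hk_def
  set n : ℕ := Module.finrank ℝ k with hn_def
  let b : Module.Basis (Fin n) ℝ k := Module.finBasis ℝ k
  -- the linear equivalence
  let L : (ℝ × (Fin n → ℝ)) →ₗ[ℝ] E :=
    LinearMap.coprod (LinearMap.toSpanSingleton ℝ E v) (k.subtype ∘ₗ (b.equivFun.symm : (Fin n → ℝ) ≃ₗ[ℝ] k).toLinearMap)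
  have hL1 : ∀ p : ℝ × (Fin n → ℝ), lam (L p) = p.1 := by
    intro p
    have hker : lam ((b.equivFun.symm p.2 : k) : E) = 0 := (b.equivFun.symm p.2).2
    simp [L, LinearMap.toSpanSingleton_apply, map_add, _root_.map_smul, hv, hker, smul_eq_mul]
  have hbij : Function.Bijective L := by
    constructor
    · intro p q hpq
      have h1 : p.1 = q.1 := by rw [← hL1 p, ← hL1 q, hpq]
      have h2 : ((b.equivFun.symm p.2 : k) : E) = ((b.equivFun.symm q.2 : k) : E) := by
        have := hpq
        simp only [L, LinearMap.coprod_apply, LinearMap.toSpanSingleton_apply,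
          LinearMap.comp_apply, Submodule.coe_subtype, LinearEquiv.coe_coe] at this
        rw [h1] at this
        exact add_left_cancel this
      have h3 : (b.equivFun.symm p.2 : k) = (b.equivFun.symm q.2 : k) := Subtype.ext h2
      have h4 : p.2 = q.2 := b.equivFun.symm.injective h3
      exact Prod.ext h1 h4
    · intro x
      have hmem : x - lam x • v ∈ k := by
        simp [hk_def, LinearMap.mem_ker, map_sub, _root_.map_smul, hv, smul_eq_mul]
      refine ⟨(lam x, b.equivFun ⟨x - lam x • v, hmem⟩), ?_⟩
      simp only [L, LinearMap.coprod_apply, LinearMap.toSpanSingleton_apply,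
        LinearMap.comp_apply, Submodule.coe_subtype, LinearEquiv.coe_coe,
        LinearEquiv.symm_apply_apply]
      abel
  let Teq : (ℝ × (Fin n → ℝ)) ≃ₗ[ℝ] E := LinearEquiv.ofBijective L hbij
  let T : (ℝ × (Fin n → ℝ)) ≃L[ℝ] E := Teq.toContinuousLinearEquiv
  have hT1 : ∀ p : ℝ × (Fin n → ℝ), lam (T p) = p.1 := fun p => hL1 p
  have hTembed : MeasurableEmbedding (T : (ℝ × (Fin n → ℝ)) → E) :=
    T.toHomeomorph.measurableEmbedding
  haveI hHaarProd : (volume : Measure (ℝ × (Fin n → ℝ))).IsAddHaarMeasure := by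
    rw [Measure.volume_eq_prod]; infer_instance
  haveI hHaarMap : (Measure.map (T : (ℝ × (Fin n → ℝ)) → E) volume).IsAddHaarMeasure := by
    exact (Teq.toAddEquiv).isAddHaarMeasure_map volume T.continuous T.symm.continuous
  set c : NNReal := (volume : Measure E).addHaarScalarFactor (Measure.map (T : (ℝ × (Fin n → ℝ)) → E) volume) with hc_def
  have hvol : (volume : Measure E) = c • Measure.map (T : (ℝ × (Fin n → ℝ)) → E) volume :=
    Measure.isAddLeftInvariant_eq_smul _ _
  -- the function hT := h ∘ T
  have hTcont : Continuous fun p : ℝ × (Fin n → ℝ) => h (T p) := hcont.comp T.continuous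
  have hTcs : HasCompactSupport fun p : ℝ × (Fin n → ℝ) => h (T p) :=
    hcs.comp_homeomorph T.toHomeomorph
  have hTint : Integrable (fun p : ℝ × (Fin n → ℝ) => h (T p)) := hTcont.integrable_of_hasCompactSupport hTcs
  -- the slice function
  set m : ℝ → ℝ := fun t => ∫ z, h (T (t, z)) with hm_def
  -- bound for domination
  obtain ⟨C, hC⟩ := hTcs.exists_bound_of_continuous hTcont
  have hC0 : 0 ≤ C := le_trans (norm_nonneg _) (hC ⟨0, 0⟩)
  set Kz : Set (Fin n → ℝ) := Prod.snd '' tsupport (fun p : ℝ × (Fin n → ℝ) => h (T p)) with hKz_def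
  have hKzcomp : IsCompact Kz := (hTcs).image continuous_snd
  have hbound : ∀ t : ℝ, ∀ z, ‖h (T (t, z))‖ ≤ Kz.indicator (fun _ => C) z := by
    intro t z
    by_cases hz : (t, z) ∈ tsupport fun p : ℝ × (Fin n → ℝ) => h (T p)
    · have : z ∈ Kz := ⟨(t, z), hz, rfl⟩
      rw [indicator_of_mem this]
      exact hC _
    · have : h (T (t, z)) = 0 := image_eq_zero_of_notMem_tsupport (f := fun p : ℝ × (Fin n → ℝ) => h (T p)) hz
      rw [this]
      simp only [norm_zero]
      exact indicator_nonneg (fun _ _ => hC0) z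
  have hboundint : Integrable (Kz.indicator (fun _ => C)) := by
    rw [integrable_indicator_iff hKzcomp.isClosed.measurableSet]
    exact integrableOn_const hKzcomp.measure_lt_top.ne
  have hmcont : Continuous m := by
    rw [continuous_iff_continuousAt]
    intro t₀
    apply continuousAt_of_dominated (bound := Kz.indicator fun _ => C)
    · filter_upwards with t
      exact (hTcont.comp (Continuous.prodMk_right t)).aestronglyMeasurable
    · filter_upwards with t
      filter_upwards with z
      exact hbound t z
    · exact hboundint
    · filter_upwards with z
      exact (hTcont.comp (continuous_id.prodMk continuous_const)).continuousAt
  have hmcs : HasCompactSupport m := by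
    apply HasCompactSupport.intro (hTcs.image continuous_fst)
    intro t ht
    have : ∀ z, h (T (t, z)) = 0 := by
      intro z
      apply image_eq_zero_of_notMem_tsupport (f := fun p : ℝ × (Fin n → ℝ) => h (T p))
      intro hmem
      exact ht ⟨(t, z), hmem, rfl⟩
    simp [hm_def, this]
  have hmint : Integrable m := hmcont.integrable_of_hasCompactSupport hmcs
  -- the key identity
  have key : ∀ s : ℝ, ∫ y in {y | lam y < s}, h y = (c : ℝ) * ∫ t in Iic s, m t := by
    intro s
    have hmeasA : MeasurableSet {y : E | lam y < s} := by
      exact measurableSet_lt lam.continuous.measurable measurable_const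
    rw [hvol, ENNReal.smul_def, Measure.restrict_smul, integral_smul_measure,
      ENNReal.coe_toReal, smul_eq_mul]
    rw [hTembed.setIntegral_map]
    have hpre : (T : (ℝ × (Fin n → ℝ)) → E) ⁻¹' {y : E | lam y < s} = Iio s ×ˢ univ := by
      ext p
      simp [hT1 p]
    rw [hpre]
    rw [Measure.volume_eq_prod]
    rw [setIntegral_prod _ (by
      rw [← Measure.volume_eq_prod]
      exact hTint.integrableOn)]
    simp only [Measure.restrict_univ]
    congr 1
    exact setIntegral_congr_set Iio_ae_eq_Iic
  have keyfun : (fun s : ℝ => ∫ y in {y | lam y < s}, h y)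
      = fun s : ℝ => (c : ℝ) * ((∫ t in Iic (-1 : ℝ), m t) + ∫ t in (-1 : ℝ)..s, m t) := by
    funext s
    rw [key s]
    congr 1
    have := intervalIntegral.integral_Iic_sub_Iic (hmint.integrableOn (s := Iic (-1 : ℝ)))
      (hmint.integrableOn (s := Iic s))
    linarith
  rw [keyfun]
  have hder : HasDerivAt (fun s : ℝ => ∫ t in (-1 : ℝ)..s, m t) (m 0) 0 :=
    intervalIntegral.integral_hasDerivAt_right hmint.intervalIntegrable
      (hmcont.stronglyMeasurableAtFilter _ _) hmcont.continuousAt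
  exact ((hder.differentiableAt.const_add _).const_mul _)

lemma chart_lemma {d : ℕ}
    (lam : (EuclideanSpace ℝ (Fin d)) →L[ℝ] ℝ)
    (hslice : ∀ h : EuclideanSpace ℝ (Fin d) → ℝ, Continuous h → HasCompactSupport h →
      DifferentiableAt ℝ (fun s : ℝ => ∫ y in {y | lam y < s}, h y) 0)
    (S : EuclideanSpace ℝ (Fin d) → ℝ) (hS : ContDiff ℝ (⊤ : ℕ∞) S)
    (p : EuclideanSpace ℝ (Fin d)) (hp : fderiv ℝ S p = lam) (hlam : lam ≠ 0) :
    ∃ U : Set (EuclideanSpace ℝ (Fin d)), IsOpen U ∧ p ∈ U ∧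
      ∀ φ : EuclideanSpace ℝ (Fin d) → ℝ, Continuous φ → HasCompactSupport φ →
        tsupport φ ⊆ U → DifferentiableAt ℝ (fun s : ℝ => ∫ x in {x | S x < s}, φ x) 0 := by
  obtain ⟨u, hu⟩ : ∃ u : (EuclideanSpace ℝ (Fin d)), lam u ≠ 0 := by
    by_contra hcon
    push_neg at hcon
    exact hlam (ContinuousLinearMap.ext fun x => by simp [hcon x])
  set v : (EuclideanSpace ℝ (Fin d)) := (lam u)⁻¹ • u with hv_def
  have hv : lam v = 1 := by simp [hv_def, inv_mul_cancel₀ hu]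
  set Φ : (EuclideanSpace ℝ (Fin d)) → (EuclideanSpace ℝ (Fin d)) := fun x => x + (S x - lam x) • v with hΦ_def
  have hΦsmooth : ContDiff ℝ (⊤ : ℕ∞) Φ := contDiff_id.add ((hS.sub lam.contDiff).smul contDiff_const)
  have hΦcont : Continuous Φ := hΦsmooth.continuous
  have hkey : ∀ x, lam (Φ x) = S x := by
    intro x
    simp only [hΦ_def, map_add, _root_.map_smul, smul_eq_mul, hv]
    ring
  have hasDeriv : ∀ x, HasFDerivAt Φ
      (ContinuousLinearMap.id ℝ (EuclideanSpace ℝ (Fin d)) + (fderiv ℝ S x - lam).smulRight v) x := by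
    intro x
    exact (hasFDerivAt_id x).add
      (((hS.differentiable (by simp) x).hasFDerivAt.sub lam.hasFDerivAt).smul_const v)
  have hfderiv : ∀ x, fderiv ℝ Φ x
      = ContinuousLinearMap.id ℝ (EuclideanSpace ℝ (Fin d)) + (fderiv ℝ S x - lam).smulRight v :=
    fun x => (hasDeriv x).fderiv
  have hfderivp : fderiv ℝ Φ p = ContinuousLinearMap.id ℝ (EuclideanSpace ℝ (Fin d)) := by
    rw [hfderiv p, hp, sub_self]
    ext x
    simp
  have hstrict : HasStrictFDerivAt Φ
      ((ContinuousLinearEquiv.refl ℝ (EuclideanSpace ℝ (Fin d)) : (EuclideanSpace ℝ (Fin d)) ≃L[ℝ] (EuclideanSpace ℝ (Fin d))) : (EuclideanSpace ℝ (Fin d)) →L[ℝ] (EuclideanSpace ℝ (Fin d))) p := by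
    have h1 : HasStrictFDerivAt Φ (fderiv ℝ Φ p) p :=
      (hΦsmooth.contDiffAt).hasStrictFDerivAt (by simp)
    rwa [hfderivp, ← ContinuousLinearEquiv.coe_refl] at h1
  set ph := hstrict.toOpenPartialHomeomorph Φ with hph_def
  have hphcoe : ⇑ph = Φ := hstrict.toOpenPartialHomeomorph_coe
  have hpsrc : p ∈ ph.source := hstrict.mem_toOpenPartialHomeomorph_source
  have Dcont : Continuous fun x => (fderiv ℝ Φ x).det :=
    ContinuousLinearMap.continuous_det.comp (hΦsmooth.continuous_fderiv (by simp))
  set U : Set (EuclideanSpace ℝ (Fin d)) := ph.source ∩ {x | (fderiv ℝ Φ x).det ≠ 0} with hU_def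
  have hUopen : IsOpen U :=
    ph.open_source.inter (isOpen_compl_singleton.preimage Dcont)
  have hpU : p ∈ U := by
    refine ⟨hpsrc, ?_⟩
    simp only [mem_setOf_eq, hfderivp]
    simp [ContinuousLinearMap.det]
  have hUsub : U ⊆ ph.source := inter_subset_left
  have hdetne : ∀ x ∈ U, (fderiv ℝ Φ x).det ≠ 0 := fun x hx => hx.2
  have hsymm : ∀ x ∈ U, ph.symm (Φ x) = x := by
    intro x hx
    have := ph.left_inv (hUsub hx)
    rwa [hphcoe] at this
  have himgtgt : Φ '' U ⊆ ph.target := by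
    rintro y ⟨x, hx, rfl⟩
    have := ph.map_source (hUsub hx)
    rwa [hphcoe] at this
  have hOopen : IsOpen (Φ '' U) := by
    rw [← hphcoe]
    exact ph.isOpen_image_of_subset_source hUopen hUsub
  have hsymmU : ∀ y ∈ Φ '' U, ph.symm y ∈ U := by
    rintro y ⟨x, hx, rfl⟩
    rw [hsymm x hx]; exact hx
  refine ⟨U, hUopen, hpU, ?_⟩
  intro φ hφcont hφcs hφsupp
  set ρ : (EuclideanSpace ℝ (Fin d)) → ℝ := fun y => φ (ph.symm y) / |(fderiv ℝ Φ (ph.symm y)).det| with hρ_def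
  set h : (EuclideanSpace ℝ (Fin d)) → ℝ := (Φ '' U).indicator ρ with hh_def
  have hC : IsCompact (Φ '' tsupport φ) := hφcs.image hΦcont
  have hCsub : Φ '' tsupport φ ⊆ Φ '' U := image_mono hφsupp
  have hzero : ∀ y ∉ Φ '' tsupport φ, h y = 0 := by
    intro y hy
    by_cases hyO : y ∈ Φ '' U
    · have hxU := hsymmU y hyO
      have hφ0 : φ (ph.symm y) = 0 := by
        by_contra hne
        have hmem : ph.symm y ∈ tsupport φ := subset_tsupport φ hne
        obtain ⟨x, hx, rfl⟩ := hyO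
        rw [hsymm x hx] at hmem
        exact hy ⟨x, hmem, rfl⟩
      simp [hh_def, indicator_of_mem hyO, hρ_def, hφ0]
    · simp [hh_def, indicator_of_notMem hyO]
  have hcs_h : HasCompactSupport h := HasCompactSupport.intro hC hzero
  have hρcontOn : ContinuousOn ρ (Φ '' U) := by
    have hsymmcont : ContinuousOn (⇑ph.symm) (Φ '' U) := ph.continuousOn_symm.mono himgtgt
    apply ContinuousOn.div
    · exact hφcont.comp_continuousOn hsymmcont
    · exact (continuous_abs.comp Dcont).comp_continuousOn hsymmcont
    · intro y hy
      exact abs_ne_zero.2 (hdetne _ (hsymmU y hy))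
  have hcont_h : Continuous h := by
    rw [continuous_iff_continuousAt]
    intro y
    by_cases hy : y ∈ Φ '' U
    · have h1 : ContinuousAt ρ y := hρcontOn.continuousAt (hOopen.mem_nhds hy)
      apply h1.congr
      filter_upwards [hOopen.mem_nhds hy] with y' hy'
      simp [hh_def, indicator_of_mem hy']
    · have hyC : y ∉ Φ '' tsupport φ := fun hc => hy (hCsub hc)
      have : ∀ᶠ y' in nhds y, h y' = 0 := by
        filter_upwards [hC.isClosed.isOpen_compl.mem_nhds hyC] with y' hy'
        exact hzero y' hy'
      exact continuousAt_const.congr (by filter_upwards [this] with y' hy' using hy'.symm)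
  -- the key change of variables identity
  have key : ∀ s : ℝ, ∫ x in {x | S x < s}, φ x = ∫ y in {y | lam y < s}, h y := by
    intro s
    have hmeasS : MeasurableSet {x : (EuclideanSpace ℝ (Fin d)) | S x < s} :=
      measurableSet_lt hS.continuous.measurable measurable_const
    have hmeasL : MeasurableSet {y : (EuclideanSpace ℝ (Fin d)) | lam y < s} :=
      measurableSet_lt lam.continuous.measurable measurable_const
    have cov := integral_image_eq_integral_abs_det_fderiv_smul volume hUopen.measurableSet
      (fun x _ => (hasDeriv x).hasFDerivWithinAt) (by
        have := ph.injOn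
        rw [hphcoe] at this
        exact this.mono hUsub) ({y : EuclideanSpace ℝ (Fin d) | lam y < s}.indicator h)
    simp only [← hfderiv] at cov
    have e1 : ∫ x in {x | S x < s}, φ x = ∫ x, {x : EuclideanSpace ℝ (Fin d) | S x < s}.indicator φ x :=
      (integral_indicator hmeasS).symm
    have e2 : ∫ x, {x : EuclideanSpace ℝ (Fin d) | S x < s}.indicator φ x
        = ∫ x in U, {x : EuclideanSpace ℝ (Fin d) | S x < s}.indicator φ x := by
      refine (setIntegral_eq_integral_of_forall_compl_eq_zero fun x hx => ?_).symm
      have hφ0 : φ x = 0 := image_eq_zero_of_notMem_tsupport fun hc => hx (hφsupp hc)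
      simp [indicator_apply, hφ0]
    have e3 : ∀ x ∈ U, {x : EuclideanSpace ℝ (Fin d) | S x < s}.indicator φ x
        = |(fderiv ℝ Φ x).det| • {y : EuclideanSpace ℝ (Fin d) | lam y < s}.indicator h (Φ x) := by
      intro x hx
      have habs : |(fderiv ℝ Φ x).det| ≠ 0 := abs_ne_zero.2 (hdetne x hx)
      have hhx : h (Φ x) = φ x / |(fderiv ℝ Φ x).det| := by
        rw [hh_def, indicator_of_mem (mem_image_of_mem Φ hx)]
        simp [hρ_def, hsymm x hx]
      by_cases hxs : S x < s
      · rw [indicator_of_mem (show x ∈ {x : EuclideanSpace ℝ (Fin d) | S x < s} from hxs)]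
        rw [indicator_of_mem (show Φ x ∈ {y : EuclideanSpace ℝ (Fin d) | lam y < s} by
          simpa [hkey x] using hxs)]
        rw [hhx, smul_eq_mul]
        field_simp
      · rw [indicator_of_notMem (show x ∉ {x : EuclideanSpace ℝ (Fin d) | S x < s} from hxs)]
        rw [indicator_of_notMem (show Φ x ∉ {y : EuclideanSpace ℝ (Fin d) | lam y < s} by
          simpa [hkey x] using hxs)]
        rw [smul_zero]
    have e4 : ∫ x in U, {x : EuclideanSpace ℝ (Fin d) | S x < s}.indicator φ x
        = ∫ x in U, |(fderiv ℝ Φ x).det| • {y : EuclideanSpace ℝ (Fin d) | lam y < s}.indicator h (Φ x) :=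
      setIntegral_congr_fun hUopen.measurableSet e3
    have e5 : ∫ y in Φ '' U, {y : EuclideanSpace ℝ (Fin d) | lam y < s}.indicator h y = ∫ y, {y : EuclideanSpace ℝ (Fin d) | lam y < s}.indicator h y := by
      refine setIntegral_eq_integral_of_forall_compl_eq_zero fun y hy => ?_
      have hh0 : h y = 0 := by
        by_cases hyC : y ∈ Φ '' tsupport φ
        · exact absurd (hCsub hyC) hy
        · exact hzero y hyC
      simp [indicator_apply, hh0]
    have e6 : ∫ y, {y : EuclideanSpace ℝ (Fin d) | lam y < s}.indicator h y = ∫ y in {y | lam y < s}, h y := integral_indicator hmeasL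
    rw [e1, e2, e4, ← cov, e5, e6]
  have feq : (fun s : ℝ => ∫ x in {x | S x < s}, φ x)
      = fun s : ℝ => ∫ y in {y | lam y < s}, h y := funext key
  rw [feq]
  exact hslice h hcont_h hcs_h

lemma locally_constant_lemma {d : ℕ} (S : EuclideanSpace ℝ (Fin d) → ℝ) (hScont : Continuous S)
    (φ : EuclideanSpace ℝ (Fin d) → ℝ) (hφcs : HasCompactSupport φ)
    (hdisj : ∀ x ∈ tsupport φ, S x ≠ 0) :
    DifferentiableAt ℝ (fun s : ℝ => ∫ x in {x | S x < s}, φ x) 0 := by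
  obtain ⟨ε, hε, hεle⟩ : ∃ ε : ℝ, 0 < ε ∧ ∀ x ∈ tsupport φ, ε ≤ |S x| := by
    rcases eq_empty_or_nonempty (tsupport φ) with hemp | hne
    · exact ⟨1, one_pos, fun x hx => absurd hx (by simp [hemp])⟩
    · obtain ⟨x₀, hx₀, hmin⟩ := hφcs.exists_isMinOn hne
        ((continuous_abs.comp hScont).continuousOn)
      exact ⟨|S x₀|, abs_pos.2 (hdisj x₀ hx₀), fun x hx => hmin hx⟩
  have hmeas : ∀ s : ℝ, MeasurableSet {x : EuclideanSpace ℝ (Fin d) | S x < s} :=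
    fun s => measurableSet_lt hScont.measurable measurable_const
  have hev : (fun s : ℝ => ∫ x in {x | S x < s}, φ x)
      =ᶠ[nhds (0 : ℝ)] fun _ => ∫ x in {x | S x < (0:ℝ)}, φ x := by
    filter_upwards [Metric.ball_mem_nhds (0 : ℝ) hε] with s hs
    rw [Metric.mem_ball, Real.dist_eq, sub_zero] at hs
    rw [← integral_indicator (hmeas s), ← integral_indicator (hmeas 0)]
    congr 1
    funext x
    by_cases hφx : φ x = 0
    · simp [indicator_apply, hφx]
    · have hx : x ∈ tsupport φ := subset_tsupport φ hφx
      have hSx := hεle x hx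
      rcases le_or_gt (S x) 0 with hle | hlt
      · have hSneg : S x ≤ -ε := by
          rcases abs_cases (S x) with ⟨h1, _⟩ | ⟨h1, _⟩
          · nlinarith
          · linarith
        have h1 : S x < s := by
          have := neg_lt_of_abs_lt hs
          linarith
        have h2 : S x < 0 := by linarith
        simp [indicator_apply, h1, h2]
      · have hSpos : ε ≤ S x := by
          rcases abs_cases (S x) with ⟨h1, _⟩ | ⟨h1, _⟩
          · linarith
          · linarith
        have h1 : ¬ S x < s := by
          have := lt_of_abs_lt hs
          linarith
        have h2 : ¬ S x < 0 := by linarith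
        simp [indicator_apply, h1, h2]
  exact (differentiableAt_const _).congr_of_eventuallyEq hev

theorem sublevel_volume_differentiable
    (d : ℕ) (g : EuclideanSpace ℝ (Fin d) → ℝ)
    (hg : ContDiff ℝ (⊤ : ℕ∞) g) (hgsupp : HasCompactSupport g)
    (S : EuclideanSpace ℝ (Fin d) → ℝ) (hS : ContDiff ℝ (⊤ : ℕ∞) S)
    (hreg : ∀ x, S x = 0 → x ∈ tsupport g → fderiv ℝ S x ≠ 0) :
    DifferentiableAt ℝ (fun s : ℝ => ∫ x in {x | S x < s}, g x) 0 := by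
  classical
  set K : Set (EuclideanSpace ℝ (Fin d)) := tsupport g ∩ S ⁻¹' {0} with hK_def
  have hKcomp : IsCompact K := hgsupp.inter_right (isClosed_singleton.preimage hS.continuous)
  have hchart : ∀ p : K, ∃ U : Set (EuclideanSpace ℝ (Fin d)), IsOpen U ∧ (p : EuclideanSpace ℝ (Fin d)) ∈ U ∧
      ∀ φ : EuclideanSpace ℝ (Fin d) → ℝ, Continuous φ → HasCompactSupport φ →
        tsupport φ ⊆ U → DifferentiableAt ℝ (fun s : ℝ => ∫ x in {x | S x < s}, φ x) 0 := by
    intro p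
    have hSp : S p = 0 := by
      have := p.2.2
      simpa using this
    have hfd : fderiv ℝ S (p : EuclideanSpace ℝ (Fin d)) ≠ 0 := hreg _ hSp p.2.1
    exact chart_lemma _ (fun h hc hcs => slicing _ hfd h hc hcs) S hS _ rfl hfd
  choose U hUopen hUmem hUdiff using hchart
  have hball : ∀ p : K, ∃ rr : ℝ, 0 < rr ∧ Metric.ball (p : EuclideanSpace ℝ (Fin d)) rr ⊆ U p :=
    fun p => Metric.isOpen_iff.1 (hUopen p) _ (hUmem p)
  choose r hrpos hrsub using hball
  let bump : ∀ p : K, ContDiffBump (p : EuclideanSpace ℝ (Fin d)) :=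
    fun p => ⟨r p / 4, r p / 2, by linarith [hrpos p], by linarith [hrpos p]⟩
  have hbump_supp : ∀ p : K, tsupport (bump p) ⊆ U p := by
    intro p
    rw [(bump p).tsupport_eq]
    intro x hx
    apply hrsub p
    have : dist x (p : EuclideanSpace ℝ (Fin d)) ≤ r p / 2 := hx
    exact Metric.mem_ball.2 (lt_of_le_of_lt this (by linarith [hrpos p]))
  have hcover : K ⊆ ⋃ p : K, Metric.ball (p : EuclideanSpace ℝ (Fin d)) (r p / 4) := by
    intro x hx
    exact mem_iUnion.2 ⟨⟨x, hx⟩, Metric.mem_ball_self (by linarith [hrpos ⟨x, hx⟩])⟩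
  obtain ⟨t, ht⟩ := hKcomp.elim_finite_subcover
    (fun p : K => Metric.ball (p : EuclideanSpace ℝ (Fin d)) (r p / 4))
    (fun p => Metric.isOpen_ball) hcover
  -- products of (1 - bump)
  have hPcont : ∀ l : List K, Continuous fun x => (l.map fun q => 1 - bump q x).prod := by
    intro l
    induction l with
    | nil => simp only [List.map_nil, List.prod_nil]; exact continuous_const
    | cons p l ih =>
      simp only [List.map_cons, List.prod_cons]
      exact (continuous_const.sub (bump p).continuous).mul ih
  -- main induction
  have main : ∀ l : List K,
      DifferentiableAt ℝ (fun s : ℝ => ∫ x in {x | S x < s},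
        g x * (l.map fun q => 1 - bump q x).prod) 0 →
      DifferentiableAt ℝ (fun s : ℝ => ∫ x in {x | S x < s}, g x) 0 := by
    intro l
    induction l with
    | nil => simp only [List.map_nil, List.prod_nil, mul_one]; exact id
    | cons p l ih =>
      intro hyp
      apply ih
      have int1 : Integrable (fun x => g x * ((p :: l).map fun q => 1 - bump q x).prod) :=
        (hg.continuous.mul (hPcont (p :: l))).integrable_of_hasCompactSupport
          (hgsupp.mul_right)
      have int2 : Integrable (fun x => bump p x * (g x * (l.map fun q => 1 - bump q x).prod)) :=
        (((bump p).continuous).mul (hg.continuous.mul (hPcont l))).integrable_of_hasCompactSupport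
          ((hgsupp.mul_right).mul_left)
      have heq : (fun s : ℝ => ∫ x in {x | S x < s}, g x * (l.map fun q => 1 - bump q x).prod)
          = fun s : ℝ => (∫ x in {x | S x < s}, g x * ((p :: l).map fun q => 1 - bump q x).prod)
            + ∫ x in {x | S x < s}, bump p x * (g x * (l.map fun q => 1 - bump q x).prod) := by
        funext s
        rw [← integral_add int1.integrableOn int2.integrableOn]
        apply integral_congr_ae
        filter_upwards with x
        simp only [List.map_cons, List.prod_cons]
        ring
      rw [heq]
      apply DifferentiableAt.add hyp
      apply hUdiff p _ (((bump p).continuous).mul (hg.continuous.mul (hPcont l)))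
        ((hgsupp.mul_right).mul_left)
      refine subset_trans ?_ (hbump_supp p)
      apply closure_mono
      intro x hx
      have : bump p x ≠ 0 := by
        intro hzero
        apply hx
        simp [hzero]
      exact this
  apply main t.toList
  apply locally_constant_lemma S hS.continuous _
    (hgsupp.mul_right)
  intro x hx hSx
  have hxg : x ∈ tsupport g := by
    apply closure_mono (Function.support_mul_subset_left _ _) hx
  have hxK : x ∈ K := ⟨hxg, by simp [hSx]⟩
  obtain ⟨p, hp, hxball⟩ : ∃ p ∈ t, x ∈ Metric.ball (p : EuclideanSpace ℝ (Fin d)) (r p / 4) := by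
    have := ht hxK
    simpa using this
  apply (notMem_tsupport_iff_eventuallyEq.2 ?_) hx
  filter_upwards [Metric.isOpen_ball.mem_nhds hxball] with y hy
  have hb1 : bump p y = 1 := (bump p).one_of_mem_closedBall (Metric.ball_subset_closedBall hy)
  have : ((t.toList.map fun q => 1 - bump q y).prod : ℝ) = 0 := by
    apply List.prod_eq_zero
    exact List.mem_map.2 ⟨p, Finset.mem_toList.2 hp, by rw [hb1]; ring⟩
  show g y * (t.toList.map fun q => 1 - bump q y).prod = 0
  rw [this, mul_zero]
end

section
/- Let S : ℝ² → ℝ be S(x) = ‖x‖² − 1 and g : ℝ² → ℝ smooth with compact support. Then F(s) = ∫_{‖x‖² < 1 + s} g(x) dx is differentiable at s = 0 with F'(0) = (1/2) ∫_{‖x‖=1} g(x) dσ(x), where σ is the arclength measure on the unit circle. -/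
open MeasureTheory Metric Set

noncomputable section
local notation "E" => EuclideanSpace ℝ (Fin 2)

lemma my_polar_prod (f : E → ℝ) :
    ∫ x, f x ∂(volume : Measure E)
      = ∫ p : sphere (0 : E) 1 × Ioi (0 : ℝ), f ((p.2 : ℝ) • (p.1 : E))
          ∂((volume : Measure E).toSphere.prod (Measure.volumeIoiPow 1)) := by
  have hdim : Module.finrank ℝ E = 2 := finrank_euclideanSpace_fin
  have h1 : ∫ x, f x ∂(volume : Measure E)
      = ∫ x : ({0}ᶜ : Set E), f x ∂((volume : Measure E).comap (↑)) := by
    rw [integral_subtype_comap (measurableSet_singleton _).compl fun x ↦ f x,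
      restrict_compl_singleton]
  have h2 := (volume : Measure E).measurePreserving_homeomorphUnitSphereProd.integral_comp
    (Homeomorph.measurableEmbedding _) (fun p : sphere (0 : E) 1 × Ioi (0 : ℝ) ↦ f ((p.2 : ℝ) • (p.1 : E)))
  rw [hdim] at h2
  rw [h1, ← h2]
  refine integral_congr_ae (Filter.Eventually.of_forall fun x ↦ ?_)
  simp only [homeomorphUnitSphereProd_apply_fst_coe, homeomorphUnitSphereProd_apply_snd_coe]
  congr 1
  exact (smul_inv_smul₀ (norm_ne_zero_iff.2 x.2) _).symm


lemma my_inner (φ : ℝ → ℝ) :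
    ∫ r : Ioi (0:ℝ), φ r ∂(Measure.volumeIoiPow 1) = ∫ r in Ioi (0:ℝ), r * φ r := by
  rw [Measure.volumeIoiPow]
  simp only [ENNReal.ofReal]
  rw [integral_withDensity_eq_integral_smul ((measurable_subtype_coe.pow_const 1).real_toNNReal),
    integral_subtype_comap measurableSet_Ioi fun a ↦ Real.toNNReal (a ^ 1) • φ a]
  refine setIntegral_congr_fun measurableSet_Ioi fun x hx ↦ ?_
  rw [NNReal.smul_def, Real.coe_toNNReal _ (pow_nonneg hx.out.le _), pow_one, smul_eq_mul]

lemma my_polar (f : E → ℝ) (hsm : StronglyMeasurable f) (hf : Integrable f (volume : Measure E)) :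
    ∫ x, f x ∂(volume : Measure E)
      = ∫ θ : sphere (0:E) 1, (∫ r in Ioi (0:ℝ), r * f (r • (θ : E)))
          ∂((volume : Measure E).toSphere) := by
  have hdim : Module.finrank ℝ E = 2 := finrank_euclideanSpace_fin
  have hcont : Continuous fun p : sphere (0:E) 1 × Ioi (0:ℝ) ↦ (p.2 : ℝ) • (p.1 : E) :=
    (continuous_subtype_val.comp continuous_snd).smul (continuous_subtype_val.comp continuous_fst)
  have hmeas : AEStronglyMeasurable (fun p : sphere (0:E) 1 × Ioi (0:ℝ) ↦ f ((p.2 : ℝ) • (p.1 : E)))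
      ((volume : Measure E).toSphere.prod (Measure.volumeIoiPow 1)) :=
    (hsm.comp_measurable hcont.measurable).aestronglyMeasurable
  have hmp := (volume : Measure E).measurePreserving_homeomorphUnitSphereProd
  rw [hdim] at hmp
  have hint : Integrable (fun p : sphere (0:E) 1 × Ioi (0:ℝ) ↦ f ((p.2 : ℝ) • (p.1 : E)))
      ((volume : Measure E).toSphere.prod (Measure.volumeIoiPow 1)) := by
    rw [← hmp.integrable_comp hmeas]
    have : ((fun p : sphere (0:E) 1 × Ioi (0:ℝ) ↦ f ((p.2 : ℝ) • (p.1 : E)))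
        ∘ (homeomorphUnitSphereProd E)) = fun x : ({0}ᶜ : Set E) ↦ f x := by
      funext x
      simp only [Function.comp_apply, homeomorphUnitSphereProd_apply_fst_coe,
        homeomorphUnitSphereProd_apply_snd_coe]
      congr 1
      exact smul_inv_smul₀ (norm_ne_zero_iff.2 x.2) _
    rw [this]
    have hemb := MeasurableEmbedding.subtype_coe (measurableSet_singleton (0:E)).compl
    have := hemb.integrable_map_iff
      (g := f) (μ := (volume : Measure E).comap (↑))
    rw [map_comap_subtype_coe (measurableSet_singleton (0:E)).compl,
      restrict_compl_singleton] at this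
    exact this.1 hf
  rw [my_polar_prod f, integral_prod _ hint]
  refine integral_congr_ae (Filter.Eventually.of_forall fun θ ↦ ?_)
  exact my_inner fun r ↦ f (r • (θ : E))


lemma my_inner_calc (g : E → ℝ) (hg : Continuous g) (s : ℝ) (hs : -1 < s)
    (θ : sphere (0 : E) 1) :
    ∫ r in Ioi (0:ℝ), r * ({x : E | ‖x‖^2 < 1+s}.indicator g) (r • (θ : E))
      = (1/2) * ∫ t in (0:ℝ)..(1+s), g (Real.sqrt t • (θ : E)) := by
  have h1 : (0:ℝ) < 1 + s := by linarith
  have hθ : ‖(θ : E)‖ = 1 := mem_sphere_zero_iff_norm.1 θ.2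
  have hR : (0:ℝ) ≤ Real.sqrt (1+s) := Real.sqrt_nonneg _
  have hpt : (fun r : ℝ ↦ r * ({x : E | ‖x‖^2 < 1+s}.indicator g) (r • (θ : E)))
      = fun r : ℝ ↦ ({r : ℝ | r^2 < 1+s}.indicator (fun r : ℝ ↦ r * g (r • (θ : E)))) r := by
    funext r
    have hnorm : ‖r • (θ : E)‖^2 = r^2 := by
      rw [norm_smul, hθ, Real.norm_eq_abs, mul_one, sq_abs]
    by_cases h : r^2 < 1+s
    · rw [Set.indicator_of_mem (by simpa [Set.mem_setOf_eq, hnorm] using h) g,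
        Set.indicator_of_mem (show r ∈ {r : ℝ | r^2 < 1+s} from h)]
    · rw [Set.indicator_of_notMem (by simpa [Set.mem_setOf_eq, hnorm] using h) g,
        Set.indicator_of_notMem (show r ∉ {r : ℝ | r^2 < 1+s} from h), mul_zero]
  have hmeasP : MeasurableSet {r : ℝ | r^2 < 1+s} :=
    (isOpen_lt (continuous_pow 2) continuous_const).measurableSet
  rw [hpt, setIntegral_indicator hmeasP]
  have hset : Ioi (0:ℝ) ∩ {r : ℝ | r^2 < 1+s} = Ioo 0 (Real.sqrt (1+s)) := by
    ext r
    simp only [mem_inter_iff, mem_setOf_eq, mem_Ioi, mem_Ioo]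
    constructor
    · rintro ⟨h0, h2⟩; exact ⟨h0, (Real.lt_sqrt h0.le).2 h2⟩
    · rintro ⟨h0, hlt⟩; exact ⟨h0, (Real.lt_sqrt h0.le).1 hlt⟩
  rw [hset, ← integral_Ioc_eq_integral_Ioo, ← intervalIntegral.integral_of_le hR]
  have hgg : Continuous fun t : ℝ ↦ (1/2) * g (Real.sqrt t • (θ : E)) :=
    continuous_const.mul (hg.comp (Real.continuous_sqrt.smul continuous_const))
  have hsub := intervalIntegral.integral_comp_smul_deriv (a := (0:ℝ)) (b := Real.sqrt (1+s))
      (f := fun x : ℝ ↦ x^2) (f' := fun x : ℝ ↦ 2*x)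
      (fun x _ ↦ by simpa using hasDerivAt_pow 2 x)
      (continuous_const.mul continuous_id).continuousOn hgg
  have hL : ∫ x in (0:ℝ)..(Real.sqrt (1+s)), x * g (x • (θ : E))
      = ∫ x in (0:ℝ)..(Real.sqrt (1+s)), (2*x) • ((fun t : ℝ ↦ (1/2) * g (Real.sqrt t • (θ : E))) ∘ (fun x : ℝ ↦ x^2)) x := by
    refine intervalIntegral.integral_congr fun x hx ↦ ?_
    rw [uIcc_of_le hR] at hx
    simp only [Function.comp_apply, smul_eq_mul, Real.sqrt_sq hx.1]
    ring
  rw [hL, hsub]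
  norm_num [Real.sq_sqrt h1.le, intervalIntegral.integral_const_mul]

lemma my_rep (g : E → ℝ) (hgc : Continuous g) (hgsupp : HasCompactSupport g)
    (s : ℝ) (hs : -1 < s) :
    ∫ x in {x : E | ‖x‖^2 < 1+s}, g x
      = ∫ θ : sphere (0:E) 1, ((1/2) * ∫ t in (0:ℝ)..(1+s), g (Real.sqrt t • (θ : E)))
          ∂((volume : Measure E).toSphere) := by
  have hS : MeasurableSet {x : E | ‖x‖^2 < 1+s} :=
    (isOpen_lt (continuous_norm.pow 2) continuous_const).measurableSet
  have hgint : Integrable g (volume : Measure E) :=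
    hgc.integrable_of_hasCompactSupport hgsupp
  rw [← integral_indicator hS,
    my_polar _ (hgc.stronglyMeasurable.indicator hS) (hgint.indicator hS)]
  exact integral_congr_ae (Filter.Eventually.of_forall fun θ ↦ my_inner_calc g hgc s hs θ)

theorem circle_sublevel_deriv
    (g : EuclideanSpace ℝ (Fin 2) → ℝ) (hg : ContDiff ℝ (⊤ : ℕ∞) g)
    (hgsupp : HasCompactSupport g)
    (F : ℝ → ℝ) (hF : F = fun s : ℝ => ∫ x in {x : EuclideanSpace ℝ (Fin 2) | ‖x‖ ^ 2 < 1 + s}, g x) :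
    HasDerivAt F
      ((1 / 2) * ∫ x : sphere (0 : EuclideanSpace ℝ (Fin 2)) 1, g x
        ∂((volume : Measure (EuclideanSpace ℝ (Fin 2))).toSphere)) 0 := by
  set σ := (volume : Measure E).toSphere with hσ
  have hgc : Continuous g := hg.continuous
  obtain ⟨C, hC⟩ := hgsupp.exists_bound_of_continuous hgc
  have hcont2 : ∀ s : ℝ, Continuous fun θ : sphere (0:E) 1 ↦
      (1/2) * ∫ t in (0:ℝ)..(1+s), g (Real.sqrt t • (θ : E)) := by
    intro s
    refine continuous_const.mul ?_
    exact intervalIntegral.continuous_parametric_intervalIntegral_of_continuous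
      (f := fun (θ : sphere (0:E) 1) (t : ℝ) ↦ g (Real.sqrt t • (θ : E)))
      (hgc.comp ((Real.continuous_sqrt.comp continuous_snd).smul
        (continuous_subtype_val.comp continuous_fst))) continuous_const
  have key := hasDerivAt_integral_of_dominated_loc_of_deriv_le (μ := σ) (x₀ := (0:ℝ)) (s := ball (0:ℝ) 1)
    (F := fun s (θ : sphere (0:E) 1) ↦ (1/2) * ∫ t in (0:ℝ)..(1+s), g (Real.sqrt t • (θ : E)))
    (F' := fun s (θ : sphere (0:E) 1) ↦ (1/2) * g (Real.sqrt (1+s) • (θ : E)))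
    (bound := fun _ ↦ (1/2) * C) (ball_mem_nhds _ one_pos)
    (Filter.Eventually.of_forall fun s ↦ (hcont2 s).aestronglyMeasurable)
    ((hcont2 0).integrable_of_hasCompactSupport
      ((isClosed_tsupport _).isCompact))
    ((continuous_const.mul (hgc.comp (continuous_subtype_val.const_smul (Real.sqrt (1+0))))).aestronglyMeasurable)
    (Filter.Eventually.of_forall fun θ s _ ↦ by
      rw [norm_mul]
      have h1 : ‖(1/2 : ℝ)‖ = 1/2 := by norm_num
      rw [h1]
      exact mul_le_mul_of_nonneg_left (hC _) (by norm_num))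
    (integrable_const _)
    (Filter.Eventually.of_forall fun θ s _ ↦ by
      have hcont3 : Continuous fun t : ℝ ↦ g (Real.sqrt t • (θ : E)) :=
        hgc.comp (Real.continuous_sqrt.smul continuous_const)
      have h1 : HasDerivAt (fun u : ℝ ↦ ∫ t in (0:ℝ)..u, g (Real.sqrt t • (θ : E)))
          (g (Real.sqrt (1+s) • (θ : E))) (1+s) :=
        intervalIntegral.integral_hasDerivAt_right (hcont3.intervalIntegrable _ _)
          (hcont3.stronglyMeasurableAtFilter _ _) hcont3.continuousAt
      have h2 := h1.comp s ((hasDerivAt_id s).const_add 1)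
      simpa using HasDerivAt.const_mul (1/2 : ℝ) h2)
  have hval : ∫ θ : sphere (0:E) 1, (1/2) * g (Real.sqrt (1+0) • (θ : E)) ∂σ
      = (1/2) * ∫ θ : sphere (0:E) 1, g θ ∂σ := by
    rw [← integral_const_mul]
    norm_num
  have h2 := key.2
  rw [hval] at h2
  refine h2.congr_of_eventuallyEq ?_
  filter_upwards [Ioo_mem_nhds (by norm_num : (-1:ℝ) < 0) (by norm_num : (0:ℝ) < 1)] with s hs
  rw [hF]
  exact my_rep g hgc hgsupp s hs.1

end
end
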